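/- arXiv:1811.05182 — 2 statements merged into one kernel-verified Lean document; each statement's English description precedes it below -/
import Mathlib

section
/- (Embedding of Fourier–Lebesgue spaces into modulation spaces.) Let s ∈ ℝ and 2 ≤ q ≤ ∞. There exists a constant C = C(s,q) > 0 such that for every f ∈ L²(ℝ), ‖f‖_{M^s_{2,q}} ≤ C ‖ ξ ↦ ⟨ξ⟩^s 𝓕f(ξ) ‖_{L^q(ℝ)}; that is, the space Ĥ^{q'}_s = {f : ⟨·⟩^s 𝓕f ∈ L^q(ℝ)} embeds continuously into M^s_{2,q}. -/
open MeasureTheory Real Complex FourierTransform Filter ENNReal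

noncomputable section

/-- The `□_k` piece of the modulation norm of the function `f = 𝓕⁻¹ g` with Fourier
transform `g`: `‖□_k f‖_{L²} = ‖𝓕⁻¹(χ_{[k-1/2, k+1/2]} ⬝ 𝓕f)‖_{L²}`. -/
def boxNorm (g : ℝ → ℂ) (k : ℤ) : ℝ≥0∞ :=
  eLpNorm (𝓕⁻
    ((Set.Icc ((k : ℝ) - 1/2) ((k : ℝ) + 1/2)).indicator g)) 2 volume

/-- The modulation space norm `‖f‖_{M^s_{2,q}} = (∑_{k∈ℤ} ⟨k⟩^{sq} ‖□_k f‖_{L²}^q)^{1/q}`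
(with the supremum over `k` when `q = ∞`) of the function `f = 𝓕⁻¹ g` with Fourier
transform `g`, where `⟨k⟩ = (1+k²)^{1/2}`. -/
def modNorm (s : ℝ) (q : ℝ≥0∞) (g : ℝ → ℂ) : ℝ≥0∞ :=
  if q = ∞ then ⨆ k : ℤ, ENNReal.ofReal ((1 + (k : ℝ) ^ 2) ^ (s / 2)) * boxNorm g k
  else (∑' k : ℤ, (ENNReal.ofReal ((1 + (k : ℝ) ^ 2) ^ (s / 2)) * boxNorm g k) ^ q.toReal)
    ^ (1 / q.toReal)

/-!
Plancherel, applied to the piece `1_{[k-1/2, k+1/2]} ĝ ∈ L¹ ∩ L²`, turns `‖□_k f‖_{L²}` into the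
`L²` norm of `ĝ` over the unit interval `I_k = [k-1/2, k+1/2]`. On `I_k` Peetre's inequality makes
the weights `⟨k⟩^s` and `⟨ξ⟩^s` comparable, and since `I_k` has measure one and `q ≥ 2`, the
`L²(I_k)` norm is bounded by the `L^q(I_k)` norm. As the `I_k` are almost disjoint, the `q`-th
powers of these local norms sum to at most `‖⟨ξ⟩^s ĝ‖_{L^q}^q`.
-/

section Plancherel

variable {V F : Type*} [NormedAddCommGroup V] [InnerProductSpace ℝ V] [FiniteDimensional ℝ V]
  [MeasurableSpace V] [BorelSpace V]
  [NormedAddCommGroup F] [InnerProductSpace ℂ F] [CompleteSpace F]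

theorem integral_smul_fourierInv_eq {φ : V → ℂ} {h : V → F} (hφ : Integrable φ)
    (hh : Integrable h) : ∫ x, φ x • 𝓕⁻ h x = ∫ x, 𝓕⁻ φ x • h x := by
  have hflip : (-innerₗ V).flip = -innerₗ V := by ext; simp [real_inner_comm]
  have := VectorFourier.integral_fourierIntegral_smul_eq_flip (μ := volume) (ν := volume)
    (L := -innerₗ V) (e := 𝐞) Real.continuous_fourierChar
    (by simp only [LinearMap.neg_apply, innerₗ_apply_apply]; fun_prop) hφ hh
  rw [hflip] at this
  exact this.symm

/-- Both sides define the same tempered distribution: test against smooth compactly supported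
functions and move `𝓕⁻` onto the test function. -/
theorem fourierInv_ae_eq_fourierInv_toLp {h : V → F} (hi : Integrable h) (h2 : MemLp h 2) :
    𝓕⁻ h =ᵐ[volume] (𝓕⁻ (h2.toLp h) : Lp F 2 (volume : Measure V)) := by
  refine ae_eq_of_integral_contDiff_smul_eq ?_ ?_ fun g hg hgc => ?_
  · rw [← Real.Lp.fourierTransformInv_toLp (memLp_one_iff_integrable.2 hi)]
    exact (BoundedContinuousFunction.continuous _).locallyIntegrable
  · exact (Lp.memLp _).locallyIntegrable (by norm_num)
  set φ : SchwartzMap V ℂ :=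
    (hgc.comp_left rfl : HasCompactSupport (Complex.ofRealCLM ∘ g)).toSchwartzMap (by fun_prop)
  have hφ : ∀ x, φ x = g x := fun x => rfl
  calc ∫ x, g x • 𝓕⁻ h x = ∫ x, φ x • 𝓕⁻ h x := by simp [hφ]
    _ = ∫ x, 𝓕⁻ φ x • h x := by
      rw [integral_smul_fourierInv_eq φ.integrable hi, SchwartzMap.fourierInv_coe]
    _ = 𝓕⁻ (Lp.toTemperedDistribution (h2.toLp h)) φ := by
      rw [TemperedDistribution.fourierInv_apply, Lp.toTemperedDistribution_apply]
      exact integral_congr_ae (by filter_upwards [h2.coeFn_toLp] with x hx; rw [hx])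
    _ = ∫ x, g x • (𝓕⁻ (h2.toLp h) : Lp F 2 (volume : Measure V)) x := by
      rw [Lp.fourierInv_toTemperedDistribution_eq, Lp.toTemperedDistribution_apply]
      simp [hφ]

theorem eLpNorm_fourierInv_eq {h : V → F} (hi : Integrable h) (h2 : MemLp h 2) :
    eLpNorm (𝓕⁻ h) 2 volume = eLpNorm h 2 volume := by
  rw [eLpNorm_congr_ae (fourierInv_ae_eq_fourierInv_toLp hi h2),
    ← eLpNorm_congr_ae h2.coeFn_toLp, ← Lp.enorm_def, ← Lp.enorm_def]
  exact (Lp.fourierTransformₗᵢ V F).symm.enorm_map _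

theorem eLpNorm_fourierInv_indicator_eq {h : V → F} (h2 : MemLp h 2) {s : Set V}
    (hs : MeasurableSet s) (hμs : volume s ≠ ∞) :
    eLpNorm (𝓕⁻ (s.indicator h)) 2 volume = eLpNorm h 2 (volume.restrict s) := by
  have : IsFiniteMeasure (volume.restrict s) := isFiniteMeasure_restrict.2 hμs
  have hi : Integrable (s.indicator h) :=
    (integrable_indicator_iff hs).2 ((h2.restrict s).integrable one_le_two)
  rw [eLpNorm_fourierInv_eq hi (h2.indicator hs), eLpNorm_indicator_eq_eLpNorm_restrict hs]

end Plancherel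

theorem one_add_sq_le_two_mul_one_add_sq_sub_mul (x y : ℝ) :
    1 + x ^ 2 ≤ 2 * (1 + (x - y) ^ 2) * (1 + y ^ 2) := by
  nlinarith [sq_nonneg (x - 2 * y), sq_nonneg ((x - y) * y)]

theorem peetre_inequality (s x y : ℝ) :
    (1 + x ^ 2) ^ s ≤ (2 * (1 + (x - y) ^ 2)) ^ |s| * (1 + y ^ 2) ^ s := by
  have hx : 0 < 1 + x ^ 2 := by positivity
  have hy : 0 < 1 + y ^ 2 := by positivity
  set A := 2 * (1 + (x - y) ^ 2)
  have hA : 0 < A := by positivity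
  rcases le_total 0 s with hs | hs
  · rw [abs_of_nonneg hs, ← mul_rpow hA.le hy.le]
    exact rpow_le_rpow hx.le (one_add_sq_le_two_mul_one_add_sq_sub_mul x y) hs
  · have key := rpow_le_rpow_of_nonpos hy (one_add_sq_le_two_mul_one_add_sq_sub_mul y x) hs
    rw [show (y - x) ^ 2 = (x - y) ^ 2 by ring, mul_rpow hA.le hx.le] at key
    calc (1 + x ^ 2) ^ s = A ^ (-s) * (A ^ s * (1 + x ^ 2) ^ s) := by
          rw [← mul_assoc, ← rpow_add hA, neg_add_cancel, Real.rpow_zero, one_mul]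
      _ ≤ A ^ |s| * (1 + y ^ 2) ^ s := by rw [abs_of_nonpos hs]; gcongr

theorem one_add_sq_rpow_le_of_abs_sub_le (t : ℝ) {x y : ℝ} (hxy : |x - y| ≤ 1 / 2) :
    (1 + x ^ 2) ^ t ≤ (5 / 2) ^ |t| * (1 + y ^ 2) ^ t := by
  have h : 2 * (1 + (x - y) ^ 2) ≤ 5 / 2 := by
    nlinarith [sq_abs (x - y), abs_nonneg (x - y)]
  calc (1 + x ^ 2) ^ t ≤ (2 * (1 + (x - y) ^ 2)) ^ |t| * (1 + y ^ 2) ^ t :=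
        peetre_inequality t x y
    _ ≤ (5 / 2) ^ |t| * (1 + y ^ 2) ^ t := by gcongr

open Function in
theorem tsum_eLpNorm_restrict_rpow_le {α ι E : Type*} [MeasurableSpace α] [Countable ι]
    [NormedAddCommGroup E] {μ : Measure α} {p : ℝ≥0∞} (hp0 : p ≠ 0) (hp : p ≠ ∞)
    {s : ι → Set α} (hs : ∀ i, NullMeasurableSet (s i) μ) (hd : Pairwise (AEDisjoint μ on s))
    (f : α → E) :
    ∑' i, eLpNorm f p (μ.restrict (s i)) ^ p.toReal ≤ eLpNorm f p μ ^ p.toReal := by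
  have hp' : 0 < p.toReal := ENNReal.toReal_pos hp0 hp
  simp_rw [eLpNorm_eq_lintegral_rpow_enorm_toReal hp0 hp, ← ENNReal.rpow_mul,
    one_div_mul_cancel hp'.ne', ENNReal.rpow_one]
  rw [← lintegral_iUnion₀ hs hd]
  exact setLIntegral_le_lintegral _ _

theorem tsum_rpow_rpow_one_div_le_mul {ι : Type*} {r : ℝ} (hr : 0 < r) {a b : ι → ℝ≥0∞}
    {c B : ℝ≥0∞} (hab : ∀ i, a i ≤ c * b i) (hb : ∑' i, b i ^ r ≤ B ^ r) :
    (∑' i, a i ^ r) ^ (1 / r) ≤ c * B :=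
  calc (∑' i, a i ^ r) ^ (1 / r) ≤ (∑' i, c ^ r * b i ^ r) ^ (1 / r) := by
        gcongr with i
        rw [← ENNReal.mul_rpow_of_nonneg _ _ hr.le]
        exact ENNReal.rpow_le_rpow (hab i) hr.le
    _ ≤ (c ^ r * B ^ r) ^ (1 / r) := by rw [ENNReal.tsum_mul_left]; gcongr
    _ = c * B := by
        rw [← ENNReal.mul_rpow_of_nonneg _ _ hr.le, ← ENNReal.rpow_mul,
          mul_one_div_cancel hr.ne', ENNReal.rpow_one]

open Function in
theorem pairwise_aedisjoint_Icc_intCast_sub_half_add_half :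
    Pairwise (AEDisjoint volume on fun k : ℤ => Set.Icc ((k : ℝ) - 1/2) ((k : ℝ) + 1/2)) := by
  intro m n hmn
  refine (Set.pairwise_disjoint_Ioo_add_intCast (-1/2 : ℝ) hmn).aedisjoint.congr ?_ ?_ <;>
  · refine Ioo_ae_eq_Icc.symm.trans (EventuallyEq.of_eq ?_)
    congr 1 <;> ring

theorem boxNorm_eq_eLpNorm_restrict {g : ℝ → ℂ} (hg : MemLp g 2) (k : ℤ) :
    boxNorm g k = eLpNorm g 2 (volume.restrict (Set.Icc ((k : ℝ) - 1/2) ((k : ℝ) + 1/2))) :=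
  eLpNorm_fourierInv_indicator_eq hg measurableSet_Icc (by simp)

theorem weight_mul_boxNorm_le (s : ℝ) {q : ℝ≥0∞} (hq : 2 ≤ q) {g : ℝ → ℂ} (hg : MemLp g 2)
    (k : ℤ) :
    ENNReal.ofReal ((1 + (k : ℝ) ^ 2) ^ (s / 2)) * boxNorm g k ≤
      ENNReal.ofReal ((5 / 2) ^ |s / 2|) *
        eLpNorm (fun ξ : ℝ => (((1 + ξ ^ 2) ^ (s / 2) : ℝ) : ℂ) * g ξ) q
          (volume.restrict (Set.Icc ((k : ℝ) - 1/2) ((k : ℝ) + 1/2))) := by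
  set I := Set.Icc ((k : ℝ) - 1/2) ((k : ℝ) + 1/2)
  set G : ℝ → ℂ := fun ξ => (((1 + ξ ^ 2) ^ (s / 2) : ℝ) : ℂ) * g ξ
  set w : ℝ := (1 + (k : ℝ) ^ 2) ^ (s / 2)
  have : IsProbabilityMeasure (volume.restrict I) := ⟨by simp [I]; norm_num⟩
  have hw : 0 ≤ w := by positivity
  have hweight : ∀ᵐ ξ ∂volume.restrict I, ‖w • g ξ‖ ≤ (5 / 2) ^ |s / 2| * ‖G ξ‖ := by
    refine (ae_restrict_iff' measurableSet_Icc).2 (ae_of_all _ fun ξ hξ => ?_)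
    have hkξ : |(k : ℝ) - ξ| ≤ 1 / 2 := abs_sub_le_iff.2 ⟨by linarith [hξ.1], by linarith [hξ.2]⟩
    rw [norm_smul, norm_mul, Complex.norm_real, Real.norm_of_nonneg hw,
      Real.norm_of_nonneg (by positivity), ← mul_assoc]
    gcongr
    exact one_add_sq_rpow_le_of_abs_sub_le _ hkξ
  have hG : AEStronglyMeasurable G (volume.restrict I) :=
    (Complex.continuous_ofReal.comp ((by fun_prop : Continuous fun ξ : ℝ => 1 + ξ ^ 2).rpow_const
      fun ξ => Or.inl (by positivity))).aestronglyMeasurable.mul hg.1.restrict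
  calc ENNReal.ofReal w * boxNorm g k = eLpNorm (w • g) 2 (volume.restrict I) := by
        rw [eLpNorm_const_smul, Real.enorm_of_nonneg hw, boxNorm_eq_eLpNorm_restrict hg]
    _ ≤ ENNReal.ofReal ((5 / 2) ^ |s / 2|) * eLpNorm G 2 (volume.restrict I) :=
        eLpNorm_le_mul_eLpNorm_of_ae_le_mul hweight 2
    _ ≤ ENNReal.ofReal ((5 / 2) ^ |s / 2|) * eLpNorm G q (volume.restrict I) := by
        gcongr
        exact eLpNorm_le_eLpNorm_of_exponent_le hq hG

/-- **Embedding of Fourier–Lebesgue spaces into modulation spaces.** Let `s ∈ ℝ` and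
`2 ≤ q ≤ ∞`. There is a constant `C = C(s,q) > 0` such that every `f = 𝓕⁻¹ g ∈ L²(ℝ)`
with Fourier transform `g` satisfies `‖f‖_{M^s_{2,q}} ≤ C ‖⟨ξ⟩^s 𝓕f(ξ)‖_{L^q(ℝ)}`;
that is, `Ĥ^{q'}_s ⊂ M^s_{2,q}` continuously. -/
theorem fourierLebesgue_embeds_modulation (s : ℝ) (q : ℝ≥0∞) (hq : 2 ≤ q) :
    ∃ C : ℝ, 0 < C ∧ ∀ g : ℝ → ℂ, MemLp g 2 volume →
      modNorm s q g ≤ ENNReal.ofReal C *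
        eLpNorm (fun ξ : ℝ => (((1 + ξ ^ 2) ^ (s / 2) : ℝ) : ℂ) * g ξ) q volume := by
  refine ⟨(5 / 2) ^ |s / 2|, by positivity, fun g hg => ?_⟩
  have hbox := weight_mul_boxNorm_le s hq hg
  rw [modNorm]
  split_ifs with hq_top
  · exact iSup_le fun k => (hbox k).trans (by gcongr; exact Measure.restrict_le_self)
  · have hq0 : q ≠ 0 := (two_pos.trans_le hq).ne'
    exact tsum_rpow_rpow_one_div_le_mul (ENNReal.toReal_pos hq0 hq_top) hbox
      (tsum_eLpNorm_restrict_rpow_le hq0 hq_top (fun _ => measurableSet_Icc.nullMeasurableSet)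
        pairwise_aedisjoint_Icc_intCast_sub_half_add_half _)

end
end

section
/- (Smallness of the resonance function on the ill-posedness frequency configuration.) Let N ≥ 1 be a real number and let ξ, ξ₁, ξ₂ ∈ ℝ satisfy ξ₁ ∈ [N, N+N^{-1/2}], ξ₂ ∈ [−N−N^{-1/2}, −N], and ξ − ξ₁ − ξ₂ ∈ [N, N+N^{-1/2}]. Then the resonance function Φ(ξ, ξ₁, ξ₂) := −3(ξ−ξ₁)(ξ−ξ₂)(ξ₁+ξ₂) satisfies |Φ(ξ, ξ₁, ξ₂)| ≤ 15; moreover ξ ∈ [N − N^{-1/2}, N + 2N^{-1/2}], and (ξ−ξ₁−ξ₂)³ + ξ₁³ + ξ₂³ − ξ³ = Φ(ξ, ξ₁, ξ₂). -/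
/-- **Smallness of the resonance function on the ill-posedness frequency configuration.**
If `N ≥ 1`, `ξ₁ ∈ [N, N+N^{-1/2}]`, `ξ₂ ∈ [-N-N^{-1/2}, -N]` and
`ξ - ξ₁ - ξ₂ ∈ [N, N+N^{-1/2}]`, then the resonance function
`Φ(ξ,ξ₁,ξ₂) = -3(ξ-ξ₁)(ξ-ξ₂)(ξ₁+ξ₂)` satisfies `|Φ| ≤ 15`; moreover
`ξ ∈ [N - N^{-1/2}, N + 2N^{-1/2}]` and `(ξ-ξ₁-ξ₂)³ + ξ₁³ + ξ₂³ - ξ³ = Φ(ξ,ξ₁,ξ₂)`. -/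
theorem resonance_smallness (N ξ ξ₁ ξ₂ : ℝ) (hN : 1 ≤ N)
    (h1 : ξ₁ ∈ Set.Icc N (N + N ^ (-(1/2) : ℝ)))
    (h2 : ξ₂ ∈ Set.Icc (-N - N ^ (-(1/2) : ℝ)) (-N))
    (h3 : ξ - ξ₁ - ξ₂ ∈ Set.Icc N (N + N ^ (-(1/2) : ℝ))) :
    |(-3) * (ξ - ξ₁) * (ξ - ξ₂) * (ξ₁ + ξ₂)| ≤ 15 ∧
    ξ ∈ Set.Icc (N - N ^ (-(1/2) : ℝ)) (N + 2 * N ^ (-(1/2) : ℝ)) ∧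
    (ξ - ξ₁ - ξ₂) ^ 3 + ξ₁ ^ 3 + ξ₂ ^ 3 - ξ ^ 3 =
      (-3) * (ξ - ξ₁) * (ξ - ξ₂) * (ξ₁ + ξ₂) := by
  set e : ℝ := N ^ (-(1/2) : ℝ) with he
  have hN0 : (0:ℝ) < N := lt_of_lt_of_le one_pos hN
  have he0 : 0 < e := Real.rpow_pos_of_pos hN0 _
  have he2 : e ^ 2 * N = 1 := by
    rw [he, ← Real.rpow_natCast (N ^ (-(1/2):ℝ)) 2, ← Real.rpow_mul hN0.le]
    norm_num
    rw [Real.rpow_neg_one]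
    field_simp
  have he1 : e ≤ 1 := by nlinarith
  obtain ⟨h1a, h1b⟩ := h1
  obtain ⟨h2a, h2b⟩ := h2
  obtain ⟨h3a, h3b⟩ := h3
  refine ⟨?_, ⟨by linarith, by linarith⟩, by ring⟩
  have ha : |ξ - ξ₁| ≤ e := abs_le.2 ⟨by linarith, by linarith⟩
  have hb : |ξ₁ + ξ₂| ≤ e := abs_le.2 ⟨by linarith, by linarith⟩
  have hc : |ξ - ξ₂| ≤ 2 * N + 2 * e := abs_le.2 ⟨by linarith, by linarith⟩
  have key : |(-3) * (ξ - ξ₁) * (ξ - ξ₂) * (ξ₁ + ξ₂)| =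
      3 * |ξ - ξ₁| * |ξ - ξ₂| * |ξ₁ + ξ₂| := by
    rw [abs_mul, abs_mul, abs_mul]; norm_num
  rw [key]
  have h4 : 3 * |ξ - ξ₁| * |ξ - ξ₂| * |ξ₁ + ξ₂| ≤ 3 * e * (2 * N + 2 * e) * e := by
    gcongr
  nlinarith [he0.le, he1, he2]
end
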